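/- Assume β_k > 0 for all k ≥ 1, and that P_k(1) > 0 and P^{(m)}_k(1) > 0 for all k ≥ 0, where m ≥ 1. Let L_m := lim_{n→∞} P_n(1)/(P^{(m)}_{n−m}(1)·P_m(1)) and assume L_m > 0. If λ < 1/(1−L_m), then the sequence P*_n(1, λ, m)/P_n(1) converges as n → ∞ to λ + (1−λ)/L_m, which is strictly positive; moreover this sequence is monotonically nonincreasing when λ ≥ 1 and monotonically nondecreasing when λ ≤ 1. If λ = 1/(1−L_m), then lim_{n→∞} P*_n(1, λ, m)/P_n(1) = 0. -/

import Mathlib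

open Polynomial Filter

noncomputable section

/-- Monic polynomials `P_0 = 1`, `P_1 = X`, `P_{k+1} = X·P_k − β_k·P_{k−1}` (`k ≥ 1`). -/
def recP (β : ℕ → ℝ) : ℕ → Polynomial ℝ
  | 0 => 1
  | 1 => X
  | (k + 2) => X * recP β (k + 1) - C (β (k + 1)) * recP β k

/-- Co-dilated polynomials: same recurrence as `recP β`, except that at index `k = m`
the coefficient `β_m` is replaced by `λ·β_m`. -/
def recPstar (β : ℕ → ℝ) (lam : ℝ) (m : ℕ) : ℕ → Polynomial ℝ
  | 0 => 1
  | 1 => X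
  | (k + 2) => X * recPstar β lam m (k + 1) -
      C (if k + 1 = m then lam * β (k + 1) else β (k + 1)) * recPstar β lam m k

/-- The `m`-th numerator polynomials: `P^{(m)}_0 = 1`, `P^{(m)}_1 = X`,
`P^{(m)}_{k+1} = X·P^{(m)}_k − β_{k+m}·P^{(m)}_{k−1}` (`k ≥ 1`). -/
def recPnum (β : ℕ → ℝ) (m : ℕ) : ℕ → Polynomial ℝ
  | 0 => 1
  | 1 => X
  | (k + 2) => X * recPnum β m (k + 1) - C (β (k + 1 + m)) * recPnum β m k


/-- The sequence `a_n = P_n(1)/(P^{(m)}_{n−m}(1)·P_m(1))` (for `n ≥ m`). -/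
def aSeq (β : ℕ → ℝ) (m : ℕ) (n : ℕ) : ℝ :=
  (recP β n).eval 1 / ((recPnum β m (n - m)).eval 1 * (recP β m).eval 1)

/-- The normalized co-dilated sequence `P*_n(1, λ, m)/P_n(1)`. -/
def qSeq (β : ℕ → ℝ) (lam : ℝ) (m : ℕ) (n : ℕ) : ℝ :=
  (recPstar β lam m n).eval 1 / (recP β n).eval 1

/-!
Killing the coefficient at index `m` decouples the recurrence, `P*_{m+j}(x, 0, m) = P_m P^{(m)}_j`,
and `P*_n(x, λ, m) = λ P_n + (1 - λ) P*_n(x, 0, m)`. Hence `P*_n(1)/P_n(1) = λ + (1 - λ)/a_n`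
for `n ≥ m`, which gives the limit, and the sign of `1 - λ` decides the monotonicity, because
the Casoratian `P^{(m)}_{j+1} P_{m+j} - P^{(m)}_j P_{m+j+1} = β_m ⋯ β_{m+j} P_{m-1}` is positive
at `1`.
-/

theorem recPstar_of_le (β : ℕ → ℝ) (lam : ℝ) {m n : ℕ} (h : n ≤ m) :
    recPstar β lam m n = recP β n := by
  induction n using Nat.strong_induction_on with
  | _ n ih =>
    match n, h with
    | 0, _ => rfl
    | 1, _ => rfl
    | k + 2, h =>
      rw [recPstar, recP, ih (k + 1) (by omega) (by omega), ih k (by omega) (by omega),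
        if_neg (by omega)]

theorem recPstar_eq_affine (β : ℕ → ℝ) (lam : ℝ) (m : ℕ) :
    ∀ n, recPstar β lam m n = C lam * recP β n + C (1 - lam) * recPstar β 0 m n
  | 0 => by simp only [recPstar, recP, ← C_add, add_sub_cancel, mul_one, C_1]
  | 1 => by simp only [recPstar, recP, ← add_mul, ← C_add, add_sub_cancel, C_1, one_mul]
  | k + 2 => by
    rw [recPstar, recPstar, recP, recPstar_eq_affine β lam m (k + 1)]
    by_cases hk : k + 1 = m
    · rw [if_pos hk, if_pos hk, recPstar_of_le β lam (by omega), recPstar_of_le β 0 (by omega)]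
      simp only [zero_mul, C_0, C_mul]
      ring
    · rw [if_neg hk, if_neg hk, recPstar_eq_affine β lam m k]
      ring

theorem recPstar_zero_add (β : ℕ → ℝ) (m : ℕ) :
    ∀ j, recPstar β 0 m (m + j) = recP β m * recPnum β m j
  | 0 => by rw [add_zero, recPstar_of_le β 0 le_rfl, recPnum, mul_one]
  | 1 => by
    rcases m with _ | k
    · simp [recPstar, recPnum, recP]
    · rw [recPstar, if_pos rfl, zero_mul, C_0, zero_mul, sub_zero,
        recPstar_of_le β 0 le_rfl, recPnum, mul_comm]
  | j + 2 => by
    rw [← add_assoc, recPstar, if_neg (by omega), add_assoc m j 1,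
      recPstar_zero_add β m (j + 1), recPstar_zero_add β m j, recPnum, add_comm m (j + 1)]
    ring

theorem recPnum_casoratian (β : ℕ → ℝ) (k : ℕ) :
    ∀ j, recPnum β (k + 1) (j + 1) * recP β (k + 1 + j)
        - recPnum β (k + 1) j * recP β (k + 1 + (j + 1))
      = C (∏ i ∈ Finset.range (j + 1), β (k + 1 + i)) * recP β k
  | 0 => by simp [recPnum, recP]
  | j + 1 => by
    have ih := recPnum_casoratian β k j
    rw [Finset.prod_range_succ, C_mul, mul_comm _ (C _), mul_assoc, ← ih,
      recPnum, show k + 1 + (j + 1 + 1) = (k + 1 + j) + 2 by omega, recP,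
      show k + 1 + j + 1 = k + 1 + (j + 1) by omega]
    ring_nf

theorem qSeq_eq_affine (β : ℕ → ℝ) (lam : ℝ) (m : ℕ) {n : ℕ}
    (hn : (recP β n).eval 1 ≠ 0) :
    qSeq β lam m n = lam + (1 - lam) * qSeq β 0 m n := by
  rw [qSeq, qSeq, recPstar_eq_affine, eval_add, eval_mul, eval_mul, eval_C, eval_C, add_div,
    mul_div_assoc, mul_div_assoc, div_self hn, mul_one]

theorem qSeq_zero_eq_inv_aSeq (β : ℕ → ℝ) {m n : ℕ} (h : m ≤ n) :
    qSeq β 0 m n = (aSeq β m n)⁻¹ := by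
  obtain ⟨j, rfl⟩ := Nat.exists_eq_add_of_le h
  rw [qSeq, aSeq, recPstar_zero_add, Nat.add_sub_cancel_left, inv_div, eval_mul, mul_comm]

theorem monotone_qSeq_zero (β : ℕ → ℝ) (k : ℕ) (hβ : ∀ i, k < i → 0 ≤ β i)
    (hP : ∀ n, 0 < (recP β n).eval 1) : Monotone (qSeq β 0 (k + 1)) := by
  refine monotone_nat_of_le_succ fun n => ?_
  rcases lt_or_ge n (k + 1) with hn | hn
  · have hone : ∀ i ≤ k + 1, qSeq β 0 (k + 1) i = 1 := fun i hi => by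
      rw [qSeq, recPstar_of_le β 0 hi, div_self (hP i).ne']
    rw [hone n hn.le, hone (n + 1) hn]
  obtain ⟨j, rfl⟩ := Nat.exists_eq_add_of_le hn
  have hcas := congrArg (eval 1) (recPnum_casoratian β k j)
  simp only [eval_sub, eval_mul, eval_C] at hcas
  have hprod : 0 ≤ ∏ i ∈ Finset.range (j + 1), β (k + 1 + i) :=
    Finset.prod_nonneg fun i _ => hβ _ (by omega)
  rw [qSeq, qSeq, add_assoc (k + 1) j 1, recPstar_zero_add, recPstar_zero_add, eval_mul, eval_mul,
    div_le_div_iff₀ (hP _) (hP _), ← sub_nonneg]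
  calc 0 ≤ (recP β (k + 1)).eval 1 *
          ((∏ i ∈ Finset.range (j + 1), β (k + 1 + i)) * (recP β k).eval 1) :=
        mul_nonneg (hP _).le (mul_nonneg hprod (hP k).le)
    _ = _ := by rw [← hcas]; ring

theorem codilated_asymptotics_at_one_general (β : ℕ → ℝ) (hβ : ∀ k, 1 ≤ k → 0 < β k)
    (m : ℕ) (hm : 1 ≤ m)
    (hP : ∀ k : ℕ, 0 < (recP β k).eval 1)
    (L : ℝ) (hL : Tendsto (aSeq β m) atTop (nhds L)) (hL0 : 0 < L) (hL1 : L < 1)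
    (lam : ℝ) :
    (lam < 1 / (1 - L) →
      Tendsto (qSeq β lam m) atTop (nhds (lam + (1 - lam) / L)) ∧
      0 < lam + (1 - lam) / L ∧
      (1 ≤ lam → ∀ n : ℕ, qSeq β lam m (n + 1) ≤ qSeq β lam m n) ∧
      (lam ≤ 1 → ∀ n : ℕ, qSeq β lam m n ≤ qSeq β lam m (n + 1))) ∧
    (lam = 1 / (1 - L) → Tendsto (qSeq β lam m) atTop (nhds 0)) := by
  obtain ⟨k, rfl⟩ : ∃ k, m = k + 1 := ⟨m - 1, by omega⟩
  have hq (n : ℕ) := qSeq_eq_affine β lam (k + 1) (hP n).ne'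
  have hmono := monotone_qSeq_zero β k (fun i hi => (hβ i (by omega)).le) hP
  have hlim0 : Tendsto (qSeq β 0 (k + 1)) atTop (nhds L⁻¹) :=
    (hL.inv₀ hL0.ne').congr' <| (eventually_ge_atTop (k + 1)).mono fun n hn =>
      (qSeq_zero_eq_inv_aSeq β hn).symm
  have hlim : Tendsto (qSeq β lam (k + 1)) atTop (nhds (lam + (1 - lam) / L)) := by
    rw [funext hq, div_eq_mul_inv]
    exact tendsto_const_nhds.add (hlim0.const_mul _)
  have hval : lam + (1 - lam) / L = (1 - lam * (1 - L)) / L := by field_simp; ring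
  have h1L : 0 < 1 - L := sub_pos.2 hL1
  refine ⟨fun hlam => ⟨hlim, ?_, fun hl n => ?_, fun hl n => ?_⟩, fun hlam => ?_⟩
  · rw [lt_div_iff₀ h1L] at hlam
    rw [hval]
    exact div_pos (by linarith) hL0
  · rw [hq, hq]
    nlinarith [hmono n.le_succ]
  · rw [hq, hq]
    nlinarith [hmono n.le_succ]
  · subst hlam
    rwa [hval, one_div_mul_cancel h1L.ne', sub_self, zero_div] at hlim

theorem codilated_asymptotics_at_one (β : ℕ → ℝ) (hβ : ∀ k, 1 ≤ k → 0 < β k)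
    (m : ℕ) (hm : 1 ≤ m)
    (hP : ∀ k : ℕ, 0 < (recP β k).eval 1) (hQ : ∀ k : ℕ, 0 < (recPnum β m k).eval 1)
    (L : ℝ) (hL : Tendsto (aSeq β m) atTop (nhds L)) (hL0 : 0 < L) (hL1 : L < 1)
    (lam : ℝ) :
    (lam < 1 / (1 - L) →
      Tendsto (qSeq β lam m) atTop (nhds (lam + (1 - lam) / L)) ∧
      0 < lam + (1 - lam) / L ∧
      (1 ≤ lam → ∀ n : ℕ, qSeq β lam m (n + 1) ≤ qSeq β lam m n) ∧
      (lam ≤ 1 → ∀ n : ℕ, qSeq β lam m n ≤ qSeq β lam m (n + 1))) ∧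
    (lam = 1 / (1 - L) → Tendsto (qSeq β lam m) atTop (nhds 0)) :=
  codilated_asymptotics_at_one_general β hβ m hm hP L hL hL0 hL1 lam
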